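/- Let A be a quasi-ideal automaton. Then the relation ρ on S defined by s ρ t iff s, t ∈ Im_A(e) for some idempotent [e]_A ∈ E(A) of the minimal transition ideal is an automaton congruence, and the quotient automaton A/ρ is a synchronizing strongly connected automaton; moreover every idempotent e of I(A) acts as a reset word on A/ρ. -/

import Mathlib

/-- Extended transition function of an automaton: the action of a word on a state. -/
def run {S Alph : Type*} (δ : S → Alph → S) (s : S) (x : List Alph) : S :=
  x.foldl δ s

/-- Single-letter transition of the direct product automaton. -/
def prodStep {S T Alph : Type*} (δ : S → Alph → S) (γ : T → Alph → T) :
    S × T → Alph → S × T :=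
  fun p a => (δ p.1 a, γ p.2 a)

/-- An automaton is strongly connected if every state reaches every state. -/
def StronglyConnected {S Alph : Type*} (δ : S → Alph → S) : Prop :=
  ∀ s t : S, ∃ x : List Alph, run δ s x = t

/-- A word is a reset input function if it sends every state to one fixed state. -/
def IsReset {S Alph : Type*} (δ : S → Alph → S) (x : List Alph) : Prop :=
  ∃ t : S, ∀ s : S, run δ s x = t

/-- A synchronizing automaton has at least one reset input function. -/
def Synchronizing {S Alph : Type*} (δ : S → Alph → S) : Prop :=
  ∃ x : List Alph, IsReset δ x

/-- A permutation automaton: every input word acts bijectively on the states. -/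
def PermutationAut {S Alph : Type*} (δ : S → Alph → S) : Prop :=
  ∀ x : List Alph, Function.Bijective (fun s : S => run δ s x)

/-- The range `Im_A(x)` of the input function given by the word `x`. -/
def Im {S Alph : Type*} (δ : S → Alph → S) (x : List Alph) : Set S :=
  Set.range fun s : S => run δ s x

/-- The rank of a word: cardinality of its range. -/
noncomputable def wordRank {S Alph : Type*} (δ : S → Alph → S) (x : List Alph) : ℕ :=
  (Im δ x).ncard

/-- `[x]_A` lies in the minimal ideal `I(A)` of the transition semigroup:
`x` is a nonempty word of minimal rank among nonempty words. -/
def InMinIdeal {S Alph : Type*} (δ : S → Alph → S) (x : List Alph) : Prop :=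
  x ≠ [] ∧ ∀ y : List Alph, y ≠ [] → wordRank δ x ≤ wordRank δ y

/-- `x ≡_A y` : the words `x` and `y` act equally on every state. -/
def ActEq {S Alph : Type*} (δ : S → Alph → S) (x y : List Alph) : Prop :=
  ∀ s : S, run δ s x = run δ s y

/-- `[e]_A` is an idempotent element of the minimal ideal `I(A)`. -/
def IdemMin {S Alph : Type*} (δ : S → Alph → S) (e : List Alph) : Prop :=
  InMinIdeal δ e ∧ ActEq δ (e ++ e) e

/-- The minimal ideal `I(A)` is right simple: for all `a, b ∈ I(A)` there is
`c ∈ I(A)` with `ac = b`. -/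
def RightSimpleMin {S Alph : Type*} (δ : S → Alph → S) : Prop :=
  ∀ a b : List Alph, InMinIdeal δ a → InMinIdeal δ b →
    ∃ c : List Alph, InMinIdeal δ c ∧ ActEq δ (a ++ c) b

/-- The minimal ideal `I(A)` is a right group: right simple with an idempotent. -/
def RightGroupMin {S Alph : Type*} (δ : S → Alph → S) : Prop :=
  RightSimpleMin δ ∧ ∃ e : List Alph, IdemMin δ e

/-- The ranges of the idempotents of `I(A)` form a partition of the state set. -/
def IdemPartition {S Alph : Type*} (δ : S → Alph → S) : Prop :=
  (∀ s : S, ∃ e : List Alph, IdemMin δ e ∧ s ∈ Im δ e) ∧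
  ∀ e f : List Alph, IdemMin δ e → IdemMin δ f →
    Im δ e ∩ Im δ f = ∅ ∨ Im δ e = Im δ f

/-- A quasi-ideal automaton. -/
def QuasiIdeal {S Alph : Type*} (δ : S → Alph → S) : Prop :=
  StronglyConnected δ ∧ RightGroupMin δ ∧ IdemPartition δ

/-- An automaton congruence: an equivalence relation on states compatible with
the action of every word. -/
def AutCongruence {S Alph : Type*} (δ : S → Alph → S) (r : S → S → Prop) : Prop :=
  Equivalence r ∧ ∀ s t : S, r s t → ∀ z : List Alph, r (run δ s z) (run δ t z)

/-- The congruence `π` : `s π t` iff `sx = tx` for every `[x]_A ∈ I(A)`. -/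
def piRel {S Alph : Type*} (δ : S → Alph → S) (s t : S) : Prop :=
  ∀ x : List Alph, InMinIdeal δ x → run δ s x = run δ t x

/-- The congruence `ρ` : `s ρ t` iff `s, t ∈ Im_A(e)` for some `[e]_A ∈ E(A)`. -/
def rhoRel {S Alph : Type*} (δ : S → Alph → S) (s t : S) : Prop :=
  ∃ e : List Alph, IdemMin δ e ∧ s ∈ Im δ e ∧ t ∈ Im δ e

/-
In a right group `I(A)` every idempotent `e` is a left identity of `I(A)`, and each
`x ∈ I(A)` has a right "inverse" `c ∈ I(A)` with `xc = e`; then `cx` is an idempotent of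
`I(A)` with the same range as `x`. Since `I(A)` is a right ideal, for `s, t ∈ Im(e)` the
states `sz, tz` lie in `Im(ez)`, the range of an idempotent, so `ρ` is compatible with the
transitions. The partition property makes `ρ` an equivalence, and an idempotent `e` maps
every state into the single class `Im(e)`.
-/

section

variable {S Alph : Type*} {δ : S → Alph → S}

lemma run_append (s : S) (x y : List Alph) : run δ s (x ++ y) = run δ (run δ s x) y :=
  List.foldl_append

lemma Im_append_eq_image (x y : List Alph) :
    Im δ (x ++ y) = (fun t => run δ t y) '' Im δ x := by
  simp only [Im, ← Set.range_comp, Function.comp_def, run_append]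

lemma Im_append_subset (x y : List Alph) : Im δ (x ++ y) ⊆ Im δ y := by
  rintro _ ⟨s, rfl⟩
  exact ⟨run δ s x, (run_append s x y).symm⟩

lemma InMinIdeal.append [Finite S] {x : List Alph} (hx : InMinIdeal δ x) (y : List Alph) :
    InMinIdeal δ (x ++ y) := by
  refine ⟨by simp [hx.1], fun w hw => le_trans ?_ (hx.2 w hw)⟩
  rw [wordRank, wordRank, Im_append_eq_image]
  exact Set.ncard_image_le (Set.toFinite _)

lemma IdemMin.actEq_append_of_rightSimpleMin (hrs : RightSimpleMin δ) {e x : List Alph}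
    (he : IdemMin δ e) (hx : InMinIdeal δ x) : ActEq δ (e ++ x) x := by
  obtain ⟨c, -, hc⟩ := hrs e x he.1 hx
  intro s
  calc run δ s (e ++ x) = run δ (run δ (run δ s e) e) c := by
        rw [run_append, ← hc (run δ s e), run_append]
    _ = run δ s x := by rw [← run_append s e e, he.2, ← run_append, hc]

lemma RightGroupMin.exists_idemMin_Im_eq [Finite S] (hrg : RightGroupMin δ) {x : List Alph}
    (hx : InMinIdeal δ x) : ∃ f, IdemMin δ f ∧ Im δ f = Im δ x := by
  obtain ⟨hrs, e, he⟩ := hrg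
  obtain ⟨c, hcI, hc⟩ := hrs x e hx he.1
  have hex := he.actEq_append_of_rightSimpleMin hrs hx
  have hxcx : ∀ s, run δ (run δ (run δ s x) c) x = run δ s x := fun s => by
    rw [← run_append s x c, hc, ← run_append s e x, hex]
  refine ⟨c ++ x, ⟨hcI.append x, fun s => ?_⟩, (Im_append_subset c x).antisymm ?_⟩
  · simp only [run_append, List.append_assoc, hxcx]
  · rintro _ ⟨s, rfl⟩
    exact ⟨run δ s x, by simp only [run_append, hxcx]⟩

lemma rhoRel_equivalence (hp : IdemPartition δ) : Equivalence (rhoRel δ) where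
  refl s := by
    obtain ⟨e, he, hs⟩ := hp.1 s
    exact ⟨e, he, hs, hs⟩
  symm := fun ⟨e, he, hs, ht⟩ => ⟨e, he, ht, hs⟩
  trans := by
    rintro s t u ⟨e, he, hs, ht⟩ ⟨f, hf, ht', hu⟩
    rcases hp.2 e f he hf with hdisj | hef
    · exact (Set.eq_empty_iff_forall_notMem.1 hdisj t ⟨ht, ht'⟩).elim
    · exact ⟨f, hf, hef ▸ hs, hu⟩

lemma rhoRel_run [Finite S] (hrg : RightGroupMin δ) {s t : S} (hst : rhoRel δ s t)
    (z : List Alph) : rhoRel δ (run δ s z) (run δ t z) := by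
  obtain ⟨e, he, ⟨p, rfl⟩, ⟨q, rfl⟩⟩ := hst
  obtain ⟨f, hf, hfIm⟩ := hrg.exists_idemMin_Im_eq (he.1.append z)
  exact ⟨f, hf, hfIm ▸ ⟨p, run_append p e z⟩, hfIm ▸ ⟨q, run_append q e z⟩⟩

lemma rhoRel_run_of_idemMin {e : List Alph} (he : IdemMin δ e) (s t : S) :
    rhoRel δ (run δ s e) (run δ t e) :=
  ⟨e, he, ⟨s, rfl⟩, ⟨t, rfl⟩⟩

end

/-- If `A` is a quasi-ideal automaton, then `ρ` is an automaton congruence, the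
quotient `A/ρ` (states are the `ρ`-classes) is synchronizing and strongly
connected, and every idempotent `e` of `I(A)` acts as a reset word on `A/ρ`. -/
theorem stmt11 {S Alph : Type*} [Finite S] (δ : S → Alph → S) (hq : QuasiIdeal δ) :
    AutCongruence δ (rhoRel δ) ∧
    (∀ s t : S, ∃ x : List Alph, rhoRel δ (run δ s x) t) ∧
    (∃ x : List Alph, ∀ s t : S, rhoRel δ (run δ s x) (run δ t x)) ∧
    (∀ e : List Alph, IdemMin δ e → ∀ s t : S, rhoRel δ (run δ s e) (run δ t e)) := by
  obtain ⟨hsc, hrg, hp⟩ := hq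
  have hequiv := rhoRel_equivalence hp
  obtain ⟨e, he⟩ := hrg.2
  refine ⟨⟨hequiv, fun s t hst z => rhoRel_run hrg hst z⟩, fun s t => ?_,
    ⟨e, rhoRel_run_of_idemMin he⟩, fun _ => rhoRel_run_of_idemMin⟩
  obtain ⟨x, rfl⟩ := hsc s t
  exact ⟨x, hequiv.refl _⟩
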